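/- arXiv:1805.00009 — 9 statements merged into one kernel-verified Lean document; each statement's English description precedes it below -/
import Mathlib

section
/- If δ : R → R is an additive generalized Jordan derivation with relating Jordan derivation τ on a 2-torsion free ring R, then δ(aba) = δ(a)ba + aτ(b)a + abτ(a) for all a, b ∈ R. -/
/-!
Polarizing `δ (a ^ 2) = δ a * a + a * τ a` at `a + b` gives a formula for `δ (a * b + b * a)`,
and likewise for `τ`. Since `a (ab + ba) + (ab + ba) a = (a²b + ba²) + 2 aba`, evaluating `δ` on
this element once through the polarized formula and once term by term expresses `2 δ (aba)`;
2-torsion freeness then removes the factor `2`.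
-/

section GeneralizedJordanDerivation

variable {R : Type*} [Ring R] {δ τ : R → R}

theorem map_mul_add_mul_of_map_sq (hδadd : ∀ x y, δ (x + y) = δ x + δ y)
    (hτadd : ∀ x y, τ (x + y) = τ x + τ y) (hδ : ∀ a, δ (a ^ 2) = δ a * a + a * τ a)
    (a b : R) : δ (a * b + b * a) = δ a * b + δ b * a + a * τ b + b * τ a := by
  have hsq : (a + b) ^ 2 = a ^ 2 + (a * b + b * a) + b ^ 2 := by noncomm_ring
  have h := hδ (a + b)
  rw [hsq, hδadd, hδadd, hδ a, hδ b, hδadd a b, hτadd a b] at h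
  linear_combination (norm := noncomm_ring) h

theorem map_mul_mul_add_self (hδadd : ∀ x y, δ (x + y) = δ x + δ y)
    (hτadd : ∀ x y, τ (x + y) = τ x + τ y) (hτ : ∀ a, τ (a ^ 2) = τ a * a + a * τ a)
    (hδ : ∀ a, δ (a ^ 2) = δ a * a + a * τ a) (a b : R) :
    δ (a * b * a) + δ (a * b * a) =
      (δ a * b * a + a * τ b * a + a * b * τ a) + (δ a * b * a + a * τ b * a + a * b * τ a) := by
  have hδlin := map_mul_add_mul_of_map_sq hδadd hτadd hδ
  have hτlin := map_mul_add_mul_of_map_sq hτadd hτadd hτ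
  have hsplit : a * (a * b + b * a) + (a * b + b * a) * a
      = (a ^ 2 * b + b * a ^ 2) + (a * b * a + a * b * a) := by noncomm_ring
  have h := hδlin a (a * b + b * a)
  rw [hsplit, hδadd _ (a * b * a + a * b * a), hδadd (a * b * a), hδlin (a ^ 2) b, hδ a, hτ a,
    hτlin a b, hδlin a b] at h
  linear_combination (norm := noncomm_ring) h

end GeneralizedJordanDerivation

theorem stmt_1 {R : Type*} [Ring R]
    (htf : ∀ x : R, x + x = 0 → x = 0)
    (δ τ : R → R)
    (hδadd : ∀ x y, δ (x + y) = δ x + δ y)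
    (hτadd : ∀ x y, τ (x + y) = τ x + τ y)
    (hτ : ∀ a, τ (a ^ 2) = τ a * a + a * τ a)
    (hδ : ∀ a, δ (a ^ 2) = δ a * a + a * τ a) :
    ∀ a b : R, δ (a * b * a) = δ a * b * a + a * τ b * a + a * b * τ a := by
  intro a b
  have h := map_mul_mul_add_self hδadd hτadd hτ hδ a b
  refine sub_eq_zero.mp (htf _ ?_)
  linear_combination (norm := noncomm_ring) h
end

section
/- Let e be an idempotent in a ring R and τ : R → R a Jordan derivation. Then there exists s ∈ R such that τ(e) = es − se; explicitly, one can take s = eτ(e)(1−e) − (1−e)τ(e)e. -/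
/-!
Applying the Jordan identity to `e = e²` gives `τ e = τ e * e + e * τ e`. Sandwiching this between
two copies of `e` yields `e * τ e * e = 0`, so in the Peirce decomposition of `τ e` only the
off-diagonal parts `e * τ e * (1 - e)` and `(1 - e) * τ e * e` survive, and these are exactly the
commutator of `e` with `s = e * τ e * (1 - e) - (1 - e) * τ e * e`.
-/

namespace IsIdempotentElem

variable {R : Type*} {e d : R}

theorem mul_mul_eq_zero_of_eq_mul_add_mul [NonUnitalRing R] (he : IsIdempotentElem e)
    (hd : d = d * e + e * d) : e * d * e = 0 := by
  have hdouble : e * d * e = e * d * e + e * d * e :=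
    calc e * d * e = e * (d * e + e * d) * e := by rw [← hd]
      _ = e * d * (e * e) + e * e * d * e := by noncomm_ring
      _ = e * d * e + e * d * e := by rw [he.eq]
  simpa using hdouble

theorem eq_mul_sub_mul_of_eq_mul_add_mul [Ring R] (he : IsIdempotentElem e)
    (hd : d = d * e + e * d) :
    d = e * (e * d * (1 - e) - (1 - e) * d * e) - (e * d * (1 - e) - (1 - e) * d * e) * e := by
  have hede : e * d * e = 0 := he.mul_mul_eq_zero_of_eq_mul_add_mul hd
  linear_combination (norm := noncomm_ring) hd - he.eq * d - d * he.eq + 2 * hede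

end IsIdempotentElem

theorem stmt_3_general {R : Type*} [Ring R] (e : R) (he : e * e = e)
    (τ : R → R)
    (hτ : ∀ a, τ (a ^ 2) = τ a * a + a * τ a) :
    τ e = e * (e * τ e * (1 - e) - (1 - e) * τ e * e)
        - (e * τ e * (1 - e) - (1 - e) * τ e * e) * e ∧
      ∃ s : R, τ e = e * s - s * e := by
  have hτe : τ e = τ e * e + e * τ e := by simpa [sq, he] using hτ e
  have key := IsIdempotentElem.eq_mul_sub_mul_of_eq_mul_add_mul he hτe
  exact ⟨key, _, key⟩

theorem stmt_3 {R : Type*} [Ring R] (e : R) (he : e * e = e)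
    (τ : R → R)
    (hτadd : ∀ x y, τ (x + y) = τ x + τ y)
    (hτ : ∀ a, τ (a ^ 2) = τ a * a + a * τ a) :
    τ e = e * (e * τ e * (1 - e) - (1 - e) * τ e * e)
        - (e * τ e * (1 - e) - (1 - e) * τ e * e) * e ∧
      ∃ s : R, τ e = e * s - s * e :=
  stmt_3_general e he τ hτ
end

section
/- Let Δ : R → R be an additive generalized Jordan derivation with relating Jordan derivation Ξ satisfying Ξ(e₁) = 0. Then for all a₁₁ ∈ e₁Re₁: Δ(a₁₁) = Δ(e₁)a₁₁ + Ξ(a₁₁). -/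
/-!
Put `G := Δ - Ξ`. The defining identities of `Δ` and `Ξ` give `G (y ^ 2) = G y * y`, so `G` is a
Jordan left multiplier. For `a` in the corner `e₁ R e₁`, linearizing this identity at `e₁ + a`
gives `2 G a = G e₁ * a + G a * e₁`; multiplying on the right by `e₁` yields
`G a * e₁ = G e₁ * a`, hence `2 G a = 2 G e₁ * a`, and 2-torsion freeness gives `G a = G e₁ * a`.
Finally `G e₁ = Δ e₁` because `Ξ e₁ = 0`.
-/

section JordanLeftMultiplier

variable {R : Type*} [Ring R]

theorem sub_apply_sq_eq_mul (Δ Ξ : R →+ R)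
    (hΞ : ∀ a, Ξ (a ^ 2) = Ξ a * a + a * Ξ a) (hΔ : ∀ a, Δ (a ^ 2) = Δ a * a + a * Ξ a) (a : R) :
    (Δ - Ξ) (a ^ 2) = (Δ - Ξ) a * a := by
  simp only [AddMonoidHom.sub_apply, hΔ, hΞ, sub_mul]
  abel

theorem map_add_self_eq_of_map_sq (G : R →+ R) (hG : ∀ y, G (y ^ 2) = G y * y) {e a : R}
    (he : IsIdempotentElem e) (hea : e * a = a) (hae : a * e = a) :
    G a + G a = G e * a + G a * e := by
  have hGe : G e * e = G e := by simpa [sq, he.eq] using (hG e).symm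
  have h := hG (e + a)
  rw [sq, add_mul, mul_add, mul_add, he.eq, hea, hae, ← sq] at h
  simp only [map_add, hG, mul_add, add_mul, hGe] at h
  rw [← add_left_cancel_iff (a := G e), ← add_right_cancel_iff (a := G a * a)]
  convert h using 1 <;> abel

theorem map_eq_map_idempotent_mul_of_map_sq (G : R →+ R) (hG : ∀ y, G (y ^ 2) = G y * y)
    (htf : ∀ x : R, x + x = 0 → x = 0) {e a : R}
    (he : IsIdempotentElem e) (hea : e * a = a) (hae : a * e = a) :
    G a = G e * a := by
  have hsum := map_add_self_eq_of_map_sq G hG he hea hae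
  have hright : G a * e = G e * a := by
    have h := congrArg (· * e) hsum
    simp only [add_mul, mul_assoc, he.eq, hae] at h
    exact add_right_cancel h
  rw [hright] at hsum
  refine sub_eq_zero.mp (htf _ ?_)
  rw [sub_add_sub_comm, hsum, sub_self]

end JordanLeftMultiplier

theorem stmt_10_general {R : Type*} [Ring R]
    (htf : ∀ x : R, x + x = 0 → x = 0)
    (e₁ : R) (he : e₁ * e₁ = e₁)
    (Δ Ξ : R → R)
    (hΔadd : ∀ x y, Δ (x + y) = Δ x + Δ y)
    (hΞadd : ∀ x y, Ξ (x + y) = Ξ x + Ξ y)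
    (hΞ : ∀ a, Ξ (a ^ 2) = Ξ a * a + a * Ξ a)
    (hΔ : ∀ a, Δ (a ^ 2) = Δ a * a + a * Ξ a)
    (hΞe : Ξ e₁ = 0) :
    ∀ x : R, Δ (e₁ * x * e₁) = Δ e₁ * (e₁ * x * e₁) + Ξ (e₁ * x * e₁) := by
  intro x
  let Δ' : R →+ R := AddMonoidHom.mk' Δ hΔadd
  let Ξ' : R →+ R := AddMonoidHom.mk' Ξ hΞadd
  have hcorner := map_eq_map_idempotent_mul_of_map_sq (Δ' - Ξ')
    (sub_apply_sq_eq_mul Δ' Ξ' hΞ hΔ) htf (a := e₁ * x * e₁) he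
    (by rw [← mul_assoc, ← mul_assoc, he]) (by rw [mul_assoc, he])
  simp only [AddMonoidHom.sub_apply, AddMonoidHom.mk'_apply, Δ', Ξ', hΞe, sub_zero] at hcorner
  exact eq_add_of_sub_eq hcorner

theorem stmt_10 {R : Type*} [Ring R]
    (htf : ∀ x : R, x + x = 0 → x = 0)
    (e₁ : R) (he : e₁ * e₁ = e₁) (he0 : e₁ ≠ 0) (he1 : e₁ ≠ 1)
    (Δ Ξ : R → R)
    (hΔadd : ∀ x y, Δ (x + y) = Δ x + Δ y)
    (hΞadd : ∀ x y, Ξ (x + y) = Ξ x + Ξ y)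
    (hΞ : ∀ a, Ξ (a ^ 2) = Ξ a * a + a * Ξ a)
    (hΔ : ∀ a, Δ (a ^ 2) = Δ a * a + a * Ξ a)
    (hΞe : Ξ e₁ = 0) :
    ∀ x : R, Δ (e₁ * x * e₁) = Δ e₁ * (e₁ * x * e₁) + Ξ (e₁ * x * e₁) :=
  stmt_10_general htf e₁ he Δ Ξ hΔadd hΞadd hΞ hΔ hΞe
end

section
/- Let Δ : R → R be an additive generalized Jordan derivation with relating Jordan derivation Ξ satisfying Ξ(e₁) = 0, e₂ = 1 − e₁. Then for all a₂₂ ∈ e₂Re₂: Δ(a₂₂) = Δ(e₂)a₂₂ + Ξ(a₂₂). -/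
/-!
Write `e₂ = 1 - e₁` and let `a ∈ e₂Re₂`, so that `e₁a = ae₁ = 0` and
`e₂a = ae₂ = a`.
Linearizing the defining identities gives
`Δ(bc + cb) = Δ(b)c + Δ(c)b + bΞ(c) + cΞ(b)`, and the same for `Ξ`.
With `b = e₁, c = a` this yields `Ξ(a)e₁ = -e₁Ξ(a)` and then `Δ(a)e₁ = -e₁Ξ(a)`;
with `b = e₂, c = a` it yields `2Δ(a) = Δ(e₂)a + Δ(a)e₂ + e₂Ξ(a)`, and substituting
`e₂ = 1 - e₁` into the last two terms leaves exactly `Δ(a) = Δ(e₂)a + Ξ(a)`.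
-/

section

variable {R : Type*} [Ring R]

theorem map_mul_add_mul_of_map_sq_s11 (Δ Ξ : R →+ R) (hΔ : ∀ a, Δ (a ^ 2) = Δ a * a + a * Ξ a)
    (b c : R) : Δ (b * c + c * b) = Δ b * c + Δ c * b + b * Ξ c + c * Ξ b := by
  have h := hΔ (b + c)
  rw [show (b + c) ^ 2 = b ^ 2 + (b * c + c * b) + c ^ 2 by noncomm_ring,
    map_add, map_add, hΔ, hΔ] at h
  simp only [map_add, add_mul, mul_add] at h
  rw [← sub_eq_zero] at h
  rw [map_add, ← sub_eq_zero, ← h]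
  abel

theorem map_one_eq_zero_of_map_sq {Ξ : R → R} (hΞ : ∀ a, Ξ (a ^ 2) = Ξ a * a + a * Ξ a) :
    Ξ 1 = 0 := by
  simpa using hΞ 1

section Idempotent

variable (Δ Ξ : R →+ R) {e a : R}

theorem map_mul_add_mul_map_eq_zero_of_orthogonal (hΞ : ∀ a, Ξ (a ^ 2) = Ξ a * a + a * Ξ a)
    (hΞe : Ξ e = 0) (hea : e * a = 0) (hae : a * e = 0) : Ξ a * e + e * Ξ a = 0 := by
  have h := map_mul_add_mul_of_map_sq_s11 Ξ Ξ hΞ e a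
  rwa [hea, hae, add_zero, map_zero, hΞe, zero_mul, zero_add, mul_zero, add_zero, eq_comm] at h

theorem map_mul_eq_neg_mul_map (hΔ : ∀ a, Δ (a ^ 2) = Δ a * a + a * Ξ a)
    (hΞ : ∀ a, Ξ (a ^ 2) = Ξ a * a + a * Ξ a) (he : IsIdempotentElem e) (hΞe : Ξ e = 0)
    (hea : e * a = 0) (hae : a * e = 0) : Δ a * e = -(e * Ξ a) := by
  have hanti : e * Ξ a = -(Ξ a * e) :=
    eq_neg_of_add_eq_zero_left ((add_comm _ _).trans
      (map_mul_add_mul_map_eq_zero_of_orthogonal Ξ hΞ hΞe hea hae))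
  have hcompress : e * Ξ a * e = e * Ξ a := by
    rw [hanti, neg_mul, mul_assoc, he.eq]
  have h := congrArg (· * e) (map_mul_add_mul_of_map_sq_s11 Δ Ξ hΔ e a)
  simp only [hea, hae, add_zero, map_zero, hΞe, mul_zero, zero_mul, add_mul] at h
  rw [mul_assoc (Δ e), hae, mul_zero, zero_add, mul_assoc, he.eq, hcompress] at h
  exact eq_neg_of_add_eq_zero_left h.symm

theorem map_eq_map_one_sub_mul_add (hΔ : ∀ a, Δ (a ^ 2) = Δ a * a + a * Ξ a)
    (hΞ : ∀ a, Ξ (a ^ 2) = Ξ a * a + a * Ξ a) (he : IsIdempotentElem e) (hΞe : Ξ e = 0)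
    (hea : e * a = 0) (hae : a * e = 0) : Δ a = Δ (1 - e) * a + Ξ a := by
  have hΞe₂ : Ξ (1 - e) = 0 := by
    rw [map_sub, map_one_eq_zero_of_map_sq hΞ, hΞe, sub_zero]
  have h := map_mul_add_mul_of_map_sq_s11 Δ Ξ hΔ (1 - e) a
  rw [sub_mul, mul_sub, hea, hae, one_mul, mul_one, sub_zero, mul_sub, mul_one,
    map_mul_eq_neg_mul_map Δ Ξ hΔ hΞ he hΞe hea hae, hΞe₂, mul_zero, add_zero, sub_mul,
    one_mul, map_add] at h
  rw [← sub_eq_zero, ← sub_eq_zero.mpr h]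
  abel

end Idempotent

end

theorem stmt_11_general {R : Type*} [Ring R]
    (e₁ : R) (he : e₁ * e₁ = e₁)
    (Δ Ξ : R → R)
    (hΔadd : ∀ x y, Δ (x + y) = Δ x + Δ y)
    (hΞadd : ∀ x y, Ξ (x + y) = Ξ x + Ξ y)
    (hΞ : ∀ a, Ξ (a ^ 2) = Ξ a * a + a * Ξ a)
    (hΔ : ∀ a, Δ (a ^ 2) = Δ a * a + a * Ξ a)
    (hΞe : Ξ e₁ = 0) :
    ∀ x : R, Δ ((1 - e₁) * x * (1 - e₁)) =
      Δ (1 - e₁) * ((1 - e₁) * x * (1 - e₁)) + Ξ ((1 - e₁) * x * (1 - e₁)) := by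
  intro x
  have he₁ : IsIdempotentElem e₁ := he
  have hleft : e₁ * ((1 - e₁) * x * (1 - e₁)) = 0 := by
    rw [← mul_assoc, ← mul_assoc, he₁.mul_one_sub_self, zero_mul, zero_mul]
  have hright : (1 - e₁) * x * (1 - e₁) * e₁ = 0 := by
    rw [mul_assoc, he₁.one_sub_mul_self, mul_zero]
  exact map_eq_map_one_sub_mul_add (AddMonoidHom.mk' Δ hΔadd) (AddMonoidHom.mk' Ξ hΞadd)
    hΔ hΞ he₁ hΞe hleft hright

theorem stmt_11 {R : Type*} [Ring R]
    (htf : ∀ x : R, x + x = 0 → x = 0)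
    (e₁ : R) (he : e₁ * e₁ = e₁) (he0 : e₁ ≠ 0) (he1 : e₁ ≠ 1)
    (Δ Ξ : R → R)
    (hΔadd : ∀ x y, Δ (x + y) = Δ x + Δ y)
    (hΞadd : ∀ x y, Ξ (x + y) = Ξ x + Ξ y)
    (hΞ : ∀ a, Ξ (a ^ 2) = Ξ a * a + a * Ξ a)
    (hΔ : ∀ a, Δ (a ^ 2) = Δ a * a + a * Ξ a)
    (hΞe : Ξ e₁ = 0) :
    ∀ x : R, Δ ((1 - e₁) * x * (1 - e₁)) =
      Δ (1 - e₁) * ((1 - e₁) * x * (1 - e₁)) + Ξ ((1 - e₁) * x * (1 - e₁)) :=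
  stmt_11_general e₁ he Δ Ξ hΔadd hΞadd hΞ hΔ hΞe
end

section
/- Let Δ : R → R be an additive generalized Jordan derivation with relating Jordan derivation Ξ, with Ξ(e₁) = 0, e₂ = 1 − e₁. Then Δ(a₂₁b₁₂) = Δ(a₂₁)b₁₂ + a₂₁Ξ(b₁₂) for all a₂₁ ∈ e₂Re₁, b₁₂ ∈ e₁Re₂. -/
/-!
Polarizing `Δ(a²) = Δ(a)a + aΞ(a)` gives the rule for `Δ(ab + ba)`; applying it to
`a(ab + ba) + (ab + ba)a = (a²b + ba²) + 2aba` and cancelling the factor 2 gives the rule for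
`Δ(aba)`, whose polarization is the rule for `Δ(abc + cba)`. For `a ∈ e₂Re₁`, `b ∈ e₁Re₂` the
term `b e₁ a` vanishes and `a e₁ b = ab`, so the rule for `Δ(a e₁ b + b e₁ a)` collapses,
using `Ξ(e₁) = 0`, to the claim.
-/

section

variable {R : Type*} [Ring R]

/-- `Ξ` is a Jordan derivation exactly when `IsGeneralizedJordanDerivation Ξ Ξ`. -/
def IsGeneralizedJordanDerivation (Δ Ξ : R →+ R) : Prop :=
  ∀ a, Δ (a ^ 2) = Δ a * a + a * Ξ a

namespace IsGeneralizedJordanDerivation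

variable {Δ Ξ : R →+ R}

theorem map_mul_add_mul_swap (hΔ : IsGeneralizedJordanDerivation Δ Ξ) (a b : R) :
    Δ (a * b + b * a) = Δ a * b + a * Ξ b + Δ b * a + b * Ξ a := by
  have hab := hΔ (a + b)
  rw [show (a + b) ^ 2 = a ^ 2 + (a * b + b * a) + b ^ 2 by noncomm_ring,
    map_add Δ (a ^ 2 + _), map_add Δ (a ^ 2), hΔ a, hΔ b, map_add Δ a, map_add Ξ a] at hab
  linear_combination (norm := noncomm_ring) hab

theorem map_mul_mul_self (hΔ : IsGeneralizedJordanDerivation Δ Ξ)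
    (hΞ : IsGeneralizedJordanDerivation Ξ Ξ) (htf : ∀ x : R, x + x = 0 → x = 0) (a b : R) :
    Δ (a * b * a) = Δ a * b * a + a * Ξ b * a + a * b * Ξ a := by
  have h₁ := hΔ.map_mul_add_mul_swap a (a * b + b * a)
  rw [show a * (a * b + b * a) + (a * b + b * a) * a
      = (a ^ 2 * b + b * a ^ 2) + (a * b * a + a * b * a) by noncomm_ring,
    map_add Δ (a ^ 2 * b + b * a ^ 2), map_add Δ (a * b * a), hΔ.map_mul_add_mul_swap a b,
    hΞ.map_mul_add_mul_swap a b] at h₁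
  have h₂ := hΔ.map_mul_add_mul_swap (a ^ 2) b
  rw [hΔ a, hΞ a] at h₂
  refine sub_eq_zero.mp (htf _ ?_)
  linear_combination (norm := noncomm_ring) h₁ - h₂

theorem map_mul_mul_add_mul_mul (hΔ : IsGeneralizedJordanDerivation Δ Ξ)
    (hΞ : IsGeneralizedJordanDerivation Ξ Ξ) (htf : ∀ x : R, x + x = 0 → x = 0) (a b c : R) :
    Δ (a * b * c + c * b * a) =
      Δ a * b * c + a * Ξ b * c + a * b * Ξ c + (Δ c * b * a + c * Ξ b * a + c * b * Ξ a) := by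
  have h := hΔ.map_mul_mul_self hΞ htf (a + c) b
  rw [show (a + c) * b * (a + c) = (a * b * a + c * b * c) + (a * b * c + c * b * a) by
      noncomm_ring, map_add Δ (a * b * a + c * b * c), map_add Δ (a * b * a),
    hΔ.map_mul_mul_self hΞ htf a b, hΔ.map_mul_mul_self hΞ htf c b, map_add Δ a, map_add Ξ] at h
  linear_combination (norm := noncomm_ring) h

/-- `a` and `b` play the roles of elements of `(1 - e)Re` and `eR(1 - e)`. -/
theorem map_mul_of_mul_eq_zero (hΔ : IsGeneralizedJordanDerivation Δ Ξ)
    (hΞ : IsGeneralizedJordanDerivation Ξ Ξ) (htf : ∀ x : R, x + x = 0 → x = 0)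
    {e a b : R} (hΞe : Ξ e = 0) (hae : a * e = a) (hea : e * a = 0) (heb : e * b = b)
    (hbe : b * e = 0) :
    Δ (a * b) = Δ a * b + a * Ξ b := by
  have h := hΔ.map_mul_mul_add_mul_mul hΞ htf a e b
  simp only [hΞe, hae, hbe, zero_mul, mul_zero, add_zero] at h
  simpa only [mul_assoc, heb, hea, mul_zero, add_zero] using h

end IsGeneralizedJordanDerivation

end

theorem stmt_13_general {R : Type*} [Ring R]
    (htf : ∀ x : R, x + x = 0 → x = 0)
    (e₁ : R) (he : e₁ * e₁ = e₁)
    (Δ Ξ : R → R)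
    (hΔadd : ∀ x y, Δ (x + y) = Δ x + Δ y)
    (hΞadd : ∀ x y, Ξ (x + y) = Ξ x + Ξ y)
    (hΞ : ∀ a, Ξ (a ^ 2) = Ξ a * a + a * Ξ a)
    (hΔ : ∀ a, Δ (a ^ 2) = Δ a * a + a * Ξ a)
    (hΞe : Ξ e₁ = 0) :
    ∀ x y : R,
      Δ (((1 - e₁) * x * e₁) * (e₁ * y * (1 - e₁))) =
        Δ ((1 - e₁) * x * e₁) * (e₁ * y * (1 - e₁)) +
          ((1 - e₁) * x * e₁) * Ξ (e₁ * y * (1 - e₁)) := by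
  intro x y
  have hidem : IsIdempotentElem e₁ := he
  have hΞ' : IsGeneralizedJordanDerivation (.mk' Ξ hΞadd) (.mk' Ξ hΞadd) := hΞ
  have hΔ' : IsGeneralizedJordanDerivation (.mk' Δ hΔadd) (.mk' Ξ hΞadd) := hΔ
  refine hΔ'.map_mul_of_mul_eq_zero hΞ' htf (e := e₁) hΞe ?_ ?_ ?_ ?_
  · rw [mul_assoc, he]
  · rw [← mul_assoc, ← mul_assoc, hidem.mul_one_sub_self, zero_mul, zero_mul]
  · rw [← mul_assoc, ← mul_assoc, he]
  · rw [mul_assoc, hidem.one_sub_mul_self, mul_zero]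

theorem stmt_13 {R : Type*} [Ring R]
    (htf : ∀ x : R, x + x = 0 → x = 0)
    (e₁ : R) (he : e₁ * e₁ = e₁) (he0 : e₁ ≠ 0) (he1 : e₁ ≠ 1)
    (Δ Ξ : R → R)
    (hΔadd : ∀ x y, Δ (x + y) = Δ x + Δ y)
    (hΞadd : ∀ x y, Ξ (x + y) = Ξ x + Ξ y)
    (hΞ : ∀ a, Ξ (a ^ 2) = Ξ a * a + a * Ξ a)
    (hΔ : ∀ a, Δ (a ^ 2) = Δ a * a + a * Ξ a)
    (hΞe : Ξ e₁ = 0) :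
    ∀ x y : R,
      Δ (((1 - e₁) * x * e₁) * (e₁ * y * (1 - e₁))) =
        Δ ((1 - e₁) * x * e₁) * (e₁ * y * (1 - e₁)) +
          ((1 - e₁) * x * e₁) * Ξ (e₁ * y * (1 - e₁)) :=
  stmt_13_general htf e₁ he Δ Ξ hΔadd hΞadd hΞ hΔ hΞe
end

section
/- Let R be a 2-torsion free semiprime unital ring with a nontrivial idempotent e₁ (e₂ = 1 − e₁) satisfying: (♠) if x·e₁Re₂ = 0 then e₁xe₁ = 0 and e₂xe₁ = 0; (♣) if x·e₂Re₂ = 0 then e₁xe₂ = 0 and e₂xe₂ = 0. Then every additive generalized Jordan derivation δ : R → R (with relating Jordan derivation τ) is an additive generalized derivation: there exists a derivation τ' with δ(ab) = δ(a)b + aτ'(b) for all a, b ∈ R. -/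
/-!
Brešar's theorem that a Jordan derivation `τ` of a 2-torsion free semiprime ring is a derivation
does the main work. Its proof shows that the defect `G(a, b) = τ(ab) - τ(a)b - aτ(b)` satisfies
`G(a, b) x [c, d] = 0`; semiprimeness then makes `G(a, b)` central and annihilated by all
commutators, and a last computation gives `2 G(a, b)³ = 0`, so `G(a, b)` is a central nilpotent,
hence zero.

Once `τ` is a derivation, `μ = δ - τ` satisfies `μ(x²) = μ(x)x`; linearising at `(x, 1)` in a
unital ring gives `μ(x) = μ(1)x`, so `δ(ab) = δ(a)b + aτ(b)`.
-/

def IsTwoTorsionFree (R : Type*) [AddMonoid R] : Prop := ∀ x : R, x + x = 0 → x = 0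

def IsSemiprime (R : Type*) [Ring R] : Prop := ∀ a : R, (∀ r : R, a * r * a = 0) → a = 0

def IsJordanDerivation {R : Type*} [Ring R] (D : R →+ R) : Prop :=
  ∀ a : R, D (a ^ 2) = D a * a + a * D a

def derivDefect {R : Type*} [Ring R] (D : R →+ R) (a b : R) : R := D (a * b) - D a * b - a * D b

section derivDefect

variable {R : Type*} [Ring R] (D : R →+ R)

theorem derivDefect_add_left (a b c : R) :
    derivDefect D (a + c) b = derivDefect D a b + derivDefect D c b := by
  simp only [derivDefect, add_mul, map_add]; abel

theorem derivDefect_add_right (a b d : R) :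
    derivDefect D a (b + d) = derivDefect D a b + derivDefect D a d := by
  simp only [derivDefect, mul_add, map_add]; abel

theorem derivDefect_sub_right (a b d : R) :
    derivDefect D a (b - d) = derivDefect D a b - derivDefect D a d := by
  simp only [derivDefect, mul_sub, map_sub]; abel

end derivDefect

namespace IsSemiprime

variable {R : Type*} [Ring R]

theorem mul_mul_eq_zero_of_forall_add_swap_eq_zero (hsp : IsSemiprime R)
    (htf : IsTwoTorsionFree R) {g h : R} (H : ∀ m : R, g * m * h + h * m * g = 0) (x : R) :
    g * x * h = 0 :=
  hsp _ fun z => htf _ <| by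
    linear_combination (norm := noncomm_ring)
      H (x * h * z * g * x) + (g * x * h * z) * H x - H (x * h * z) * (x * g)

theorem mul_eq_zero_of_add_eq_zero_of_forall_mul_mul_eq_zero (hsp : IsSemiprime R)
    {g h : R} (hgh : ∀ y : R, g * y * h = 0) {s t : R} (H : g * s + t * h = 0) :
    g * s = 0 :=
  hsp _ fun r => by linear_combination (norm := noncomm_ring) (g * s * r) * H - hgh (s * r * t)

theorem commute_of_forall_mul_mul_commutator_eq_zero (hsp : IsSemiprime R)
    {g : R} (H : ∀ x y : R, g * x * (g * y - y * g) = 0) (s : R) : Commute g s :=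
  sub_eq_zero.mp <| hsp _ fun r => by
    linear_combination (norm := noncomm_ring) H (s * r) s - s * H r s

theorem eq_zero_of_forall_commute_of_mul_self_eq_zero (hsp : IsSemiprime R)
    {g : R} (hg : ∀ r : R, Commute g r) (h2 : g * g = 0) : g = 0 :=
  hsp _ fun r => by rw [hg r, mul_assoc, h2, mul_zero]

theorem eq_zero_of_forall_commute_of_mul_self_mul_self_eq_zero (hsp : IsSemiprime R)
    {g : R} (hg : ∀ r : R, Commute g r) (h3 : g * g * g = 0) : g = 0 := by
  refine hsp.eq_zero_of_forall_commute_of_mul_self_eq_zero hg ?_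
  refine hsp.eq_zero_of_forall_commute_of_mul_self_eq_zero (fun r => (hg r).mul_left (hg r)) ?_
  rw [← mul_assoc, h3, zero_mul]

end IsSemiprime

namespace IsJordanDerivation

variable {R : Type*} [Ring R] {D : R →+ R}

theorem map_mul_add_map_mul_swap (hD : IsJordanDerivation D) (a b : R) :
    D (a * b) + D (b * a) = D a * b + a * D b + D b * a + b * D a := by
  have k := hD (a + b)
  rw [show (a + b) ^ 2 = a ^ 2 + (a * b + b * a) + b ^ 2 by noncomm_ring] at k
  simp only [map_add, hD a, hD b] at k
  linear_combination (norm := noncomm_ring) k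

theorem map_mul_mul_self (hD : IsJordanDerivation D) (htf : IsTwoTorsionFree R) (a b : R) :
    D (a * b * a) = D a * b * a + a * D b * a + a * b * D a := by
  have k1 := hD.map_mul_add_map_mul_swap a (a * b + b * a)
  rw [show a * (a * b + b * a) = a ^ 2 * b + a * b * a by noncomm_ring,
    show (a * b + b * a) * a = a * b * a + b * a ^ 2 by noncomm_ring] at k1
  simp only [map_add] at k1
  refine sub_eq_zero.mp (htf _ ?_)
  linear_combination (norm := noncomm_ring) k1 - hD.map_mul_add_map_mul_swap (a ^ 2) b
    + a * hD.map_mul_add_map_mul_swap a b + hD.map_mul_add_map_mul_swap a b * a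
    - hD a * b - b * hD a

theorem map_mul_mul_add_map_mul_mul_rev (hD : IsJordanDerivation D) (htf : IsTwoTorsionFree R)
    (a b c : R) :
    D (a * b * c) + D (c * b * a) =
      D a * b * c + a * D b * c + a * b * D c + D c * b * a + c * D b * a + c * b * D a := by
  have k := hD.map_mul_mul_self htf (a + c) b
  rw [show (a + c) * b * (a + c) = a * b * a + (a * b * c + (c * b * a + c * b * c)) by
    noncomm_ring] at k
  simp only [map_add] at k
  linear_combination (norm := noncomm_ring)
    k - hD.map_mul_mul_self htf a b - hD.map_mul_mul_self htf c b

-- Expand `D(ab·x·ba + ba·x·ab)` once as a triple product and once as `a(bxb)a + b(axa)b`.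
theorem derivDefect_mul_commutator_add (hD : IsJordanDerivation D) (htf : IsTwoTorsionFree R)
    (a b x : R) :
    derivDefect D a b * x * (a * b - b * a) + (a * b - b * a) * x * derivDefect D a b = 0 := by
  have c1 : D (a * b * x * (b * a)) = D (a * (b * x * b) * a) := congrArg D (by noncomm_ring)
  have c2 : D (b * a * x * (a * b)) = D (b * (a * x * a) * b) := congrArg D (by noncomm_ring)
  unfold derivDefect
  linear_combination (norm := noncomm_ring)
    hD.map_mul_mul_add_map_mul_mul_rev htf (a * b) x (b * a) - c1 - c2
      - hD.map_mul_mul_self htf a (b * x * b) - hD.map_mul_mul_self htf b (a * x * a)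
      - a * hD.map_mul_mul_self htf b x * a - b * hD.map_mul_mul_self htf a x * b
      + (a * b * x) * hD.map_mul_add_map_mul_swap a b
      + hD.map_mul_add_map_mul_swap a b * (x * (a * b))

theorem derivDefect_mul_commutator_self (hD : IsJordanDerivation D) (hsp : IsSemiprime R)
    (htf : IsTwoTorsionFree R) (a b x : R) :
    derivDefect D a b * x * (a * b - b * a) = 0 :=
  hsp.mul_mul_eq_zero_of_forall_add_swap_eq_zero htf
    (hD.derivDefect_mul_commutator_add htf a b) x

theorem derivDefect_mul_commutator_left (hD : IsJordanDerivation D) (hsp : IsSemiprime R)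
    (htf : IsTwoTorsionFree R) (a b c x : R) :
    derivDefect D a b * x * (c * b - b * c) = 0 := by
  have hlin : derivDefect D a b * (x * (c * b - b * c))
      + derivDefect D c b * x * (a * b - b * a) = 0 := by
    have k := hD.derivDefect_mul_commutator_self hsp htf (a + c) b x
    rw [derivDefect_add_left] at k
    linear_combination (norm := noncomm_ring) k
      - hD.derivDefect_mul_commutator_self hsp htf a b x
      - hD.derivDefect_mul_commutator_self hsp htf c b x
  rw [mul_assoc]
  exact hsp.mul_eq_zero_of_add_eq_zero_of_forall_mul_mul_eq_zero
    (hD.derivDefect_mul_commutator_self hsp htf a b) hlin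

theorem derivDefect_mul_commutator (hD : IsJordanDerivation D) (hsp : IsSemiprime R)
    (htf : IsTwoTorsionFree R) (a b c d x : R) :
    derivDefect D a b * x * (c * d - d * c) = 0 := by
  have hlin : derivDefect D a b * (x * (c * d - d * c))
      + derivDefect D a d * x * (c * b - b * c) = 0 := by
    have k := hD.derivDefect_mul_commutator_left hsp htf a (b + d) c x
    rw [derivDefect_add_right] at k
    linear_combination (norm := noncomm_ring) k
      - hD.derivDefect_mul_commutator_left hsp htf a b c x
      - hD.derivDefect_mul_commutator_left hsp htf a d c x
  rw [mul_assoc]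
  exact hsp.mul_eq_zero_of_add_eq_zero_of_forall_mul_mul_eq_zero
    (hD.derivDefect_mul_commutator_left hsp htf a b c) hlin

theorem commute_derivDefect (hD : IsJordanDerivation D) (hsp : IsSemiprime R)
    (htf : IsTwoTorsionFree R) (a b s : R) : Commute (derivDefect D a b) s :=
  hsp.commute_of_forall_mul_mul_commutator_eq_zero
    (fun x y => hD.derivDefect_mul_commutator hsp htf a b _ y x) s

theorem derivDefect_mul_commutator_eq_zero (hD : IsJordanDerivation D) (hsp : IsSemiprime R)
    (htf : IsTwoTorsionFree R) (a b c d : R) : derivDefect D a b * (c * d - d * c) = 0 := by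
  simpa using hD.derivDefect_mul_commutator hsp htf a b c d 1

theorem derivDefect_mul_comm (hD : IsJordanDerivation D) (hsp : IsSemiprime R)
    (htf : IsTwoTorsionFree R) (a b c : R) : derivDefect D a (b * c) = derivDefect D a (c * b) := by
  have habc : D (a * b * c) = D (a * (b * c)) := by rw [mul_assoc]
  have hcomm := (hD.commute_derivDefect hsp htf b c a).eq
  unfold derivDefect at hcomm ⊢
  linear_combination (norm := noncomm_ring) habc + hD.map_mul_mul_add_map_mul_mul_rev htf a b c
    - hD.map_mul_add_map_mul_swap a (c * b) - hD.map_mul_add_map_mul_swap b c * a + hcomm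

theorem derivDefect_commutator (hD : IsJordanDerivation D) (hsp : IsSemiprime R)
    (htf : IsTwoTorsionFree R) (a c d : R) : derivDefect D a (c * d - d * c) = 0 := by
  rw [derivDefect_sub_right, hD.derivDefect_mul_comm hsp htf, sub_self]

theorem map_commutator (hD : IsJordanDerivation D) (a b : R) :
    D (a * b - b * a) = derivDefect D a b + derivDefect D a b
      + (D a * b - b * D a) + (a * D b - D b * a) := by
  rw [map_sub]
  unfold derivDefect
  linear_combination (norm := noncomm_ring) -hD.map_mul_add_map_mul_swap a b

theorem derivDefect_mul_map_commutator_mul (hD : IsJordanDerivation D) (hsp : IsSemiprime R)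
    (htf : IsTwoTorsionFree R) (a b : R) :
    derivDefect D a b * D (a * b - b * a) * derivDefect D a b = 0 := by
  set g := derivDefect D a b
  -- `D` obeys the Leibniz rule at `(g, [a, b])`, and `g [a, b] = 0`.
  have hg : g * (a * b - b * a) = 0 := hD.derivDefect_mul_commutator_eq_zero hsp htf a b a b
  have hleibniz := hD.derivDefect_commutator hsp htf g a b
  have hcomm := (hD.commute_derivDefect hsp htf a b (a * b - b * a)).eq
  rw [derivDefect, hg, map_zero] at hleibniz
  linear_combination (norm := noncomm_ring) -hleibniz * g + D g * hcomm - D g * hg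

theorem derivDefect_eq_zero (hD : IsJordanDerivation D) (hsp : IsSemiprime R)
    (htf : IsTwoTorsionFree R) (a b : R) : derivDefect D a b = 0 := by
  set g := derivDefect D a b
  refine hsp.eq_zero_of_forall_commute_of_mul_self_mul_self_eq_zero
    (hD.commute_derivDefect hsp htf a b) (htf _ ?_)
  have hDa := hD.derivDefect_mul_commutator_eq_zero hsp htf a b (D a) b
  have hDb := hD.derivDefect_mul_commutator_eq_zero hsp htf a b a (D b)
  linear_combination (norm := noncomm_ring) hD.derivDefect_mul_map_commutator_mul hsp htf a b
    - g * hD.map_commutator a b * g - hDa * g - hDb * g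

theorem map_mul (hD : IsJordanDerivation D) (hsp : IsSemiprime R) (htf : IsTwoTorsionFree R)
    (a b : R) : D (a * b) = D a * b + a * D b := by
  have h := hD.derivDefect_eq_zero hsp htf a b
  rwa [derivDefect, sub_sub, sub_eq_zero] at h

end IsJordanDerivation

theorem AddMonoidHom.eq_map_one_mul_of_map_sq {R : Type*} [Ring R] (μ : R →+ R)
    (hμ : ∀ x : R, μ (x ^ 2) = μ x * x) (x : R) : μ x = μ 1 * x := by
  have k := hμ (x + 1)
  rw [show (x + 1) ^ 2 = x ^ 2 + x + x + 1 by noncomm_ring] at k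
  simp only [map_add, hμ x] at k
  linear_combination (norm := noncomm_ring) k

theorem stmt_15_general {R : Type*} [Ring R]
    (htf : ∀ x : R, x + x = 0 → x = 0)
    (hsemiprime : ∀ a : R, (∀ r : R, a * r * a = 0) → a = 0)
    (δ τ : R → R)
    (hδadd : ∀ x y, δ (x + y) = δ x + δ y)
    (hτadd : ∀ x y, τ (x + y) = τ x + τ y)
    (hτ : ∀ a, τ (a ^ 2) = τ a * a + a * τ a)
    (hδ : ∀ a, δ (a ^ 2) = δ a * a + a * τ a) :
    ∃ τ' : R → R,
      (∀ x y, τ' (x + y) = τ' x + τ' y) ∧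
      (∀ a b, τ' (a * b) = τ' a * b + a * τ' b) ∧
      (∀ a b, δ (a * b) = δ a * b + a * τ' b) := by
  let D := AddMonoidHom.mk' τ hτadd
  let μ := AddMonoidHom.mk' δ hδadd - D
  have hD : ∀ a b, τ (a * b) = τ a * b + a * τ b :=
    IsJordanDerivation.map_mul (D := D) hτ hsemiprime htf
  have hμ : ∀ x, μ x = μ 1 * x := μ.eq_map_one_mul_of_map_sq fun x => by
    simp only [μ, D, AddMonoidHom.sub_apply, AddMonoidHom.mk'_apply, hδ, hτ]
    noncomm_ring
  refine ⟨τ, hτadd, hD, fun a b => ?_⟩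
  have hab := hμ (a * b)
  have ha := hμ a
  simp only [μ, D, AddMonoidHom.sub_apply, AddMonoidHom.mk'_apply] at hab ha
  linear_combination (norm := noncomm_ring) hab - ha * b + hD a b

theorem stmt_15 {R : Type*} [Ring R]
    (htf : ∀ x : R, x + x = 0 → x = 0)
    (hsemiprime : ∀ a : R, (∀ r : R, a * r * a = 0) → a = 0)
    (e₁ : R) (he : e₁ * e₁ = e₁) (he0 : e₁ ≠ 0) (he1 : e₁ ≠ 1)
    (hspade : ∀ x : R, (∀ r : R, x * (e₁ * r * (1 - e₁)) = 0) →
      e₁ * x * e₁ = 0 ∧ (1 - e₁) * x * e₁ = 0)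
    (hclub : ∀ x : R, (∀ r : R, x * ((1 - e₁) * r * (1 - e₁)) = 0) →
      e₁ * x * (1 - e₁) = 0 ∧ (1 - e₁) * x * (1 - e₁) = 0)
    (δ τ : R → R)
    (hδadd : ∀ x y, δ (x + y) = δ x + δ y)
    (hτadd : ∀ x y, τ (x + y) = τ x + τ y)
    (hτ : ∀ a, τ (a ^ 2) = τ a * a + a * τ a)
    (hδ : ∀ a, δ (a ^ 2) = δ a * a + a * τ a) :
    ∃ τ' : R → R,
      (∀ x y, τ' (x + y) = τ' x + τ' y) ∧
      (∀ a b, τ' (a * b) = τ' a * b + a * τ' b) ∧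
      (∀ a b, δ (a * b) = δ a * b + a * τ' b) :=
  stmt_15_general htf hsemiprime δ τ hδadd hτadd hτ hδ
end

section
/- Let R be a 2-torsion free unital ring and δ : R → R an additive generalized Jordan triple derivation with relating Jordan triple derivation τ (i.e., δ(aba) = δ(a)ba + aτ(b)a + abτ(a) and τ(aba) = τ(a)ba + aτ(b)a + abτ(a) for all a, b). Then τ(1) = 0 and τ is a Jordan derivation: τ(a²) = τ(a)a + aτ(a) for all a ∈ R. -/
theorem JordanTriple.map_one_eq_zero {R : Type*} [Ring R]
    (htf : ∀ x : R, x + x = 0 → x = 0) (τ : R → R)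
    (hτ : ∀ a b : R, τ (a * b * a) = τ a * b * a + a * τ b * a + a * b * τ a) :
    τ 1 = 0 := by
  have h := hτ 1 1
  simp only [one_mul, mul_one] at h
  exact htf _ (add_eq_right.mp h.symm)

theorem JordanTriple.map_sq_of_map_one {R : Type*} [Ring R] (τ : R → R)
    (hτ : ∀ a b : R, τ (a * b * a) = τ a * b * a + a * τ b * a + a * b * τ a)
    (h1 : τ 1 = 0) (a : R) :
    τ (a ^ 2) = τ a * a + a * τ a := by
  simpa [sq, h1] using hτ a 1

theorem stmt_17_general {R : Type*} [Ring R]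
    (htf : ∀ x : R, x + x = 0 → x = 0)
    (τ : R → R)
    (hτ : ∀ a b : R, τ (a * b * a) = τ a * b * a + a * τ b * a + a * b * τ a) :
    τ 1 = 0 ∧ ∀ a : R, τ (a ^ 2) = τ a * a + a * τ a :=
  have h1 := JordanTriple.map_one_eq_zero htf τ hτ
  ⟨h1, JordanTriple.map_sq_of_map_one τ hτ h1⟩

theorem stmt_17 {R : Type*} [Ring R]
    (htf : ∀ x : R, x + x = 0 → x = 0)
    (δ τ : R → R)
    (hδadd : ∀ x y, δ (x + y) = δ x + δ y)
    (hτadd : ∀ x y, τ (x + y) = τ x + τ y)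
    (hτ : ∀ a b : R, τ (a * b * a) = τ a * b * a + a * τ b * a + a * b * τ a)
    (hδ : ∀ a b : R, δ (a * b * a) = δ a * b * a + a * τ b * a + a * b * τ a) :
    τ 1 = 0 ∧ ∀ a : R, τ (a ^ 2) = τ a * a + a * τ a :=
  stmt_17_general htf τ hτ
end

section
/- Let R be a 2-torsion free unital ring and δ : R → R an additive generalized Jordan triple derivation with relating Jordan triple derivation τ. Then δ is a generalized Jordan derivation: δ(a²) = δ(a)a + aτ(a) for all a ∈ R. -/
theorem jordanTriple_map_one_eq_zero {R : Type*} [Ring R]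
    (htf : ∀ x : R, x + x = 0 → x = 0) {τ : R → R}
    (hτ : ∀ a b : R, τ (a * b * a) = τ a * b * a + a * τ b * a + a * b * τ a) :
    τ 1 = 0 := by
  have h : τ 1 = τ 1 + τ 1 + τ 1 := by simpa only [mul_one, one_mul] using hτ 1 1
  exact htf _ (add_left_cancel (a := τ 1) (by rw [add_zero, ← add_assoc, ← h]))

theorem stmt_18_general {R : Type*} [Ring R]
    (htf : ∀ x : R, x + x = 0 → x = 0)
    (δ τ : R → R)
    (hτ : ∀ a b : R, τ (a * b * a) = τ a * b * a + a * τ b * a + a * b * τ a)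
    (hδ : ∀ a b : R, δ (a * b * a) = δ a * b * a + a * τ b * a + a * b * τ a) :
    ∀ a : R, δ (a ^ 2) = δ a * a + a * τ a := by
  intro a
  simpa only [mul_one, jordanTriple_map_one_eq_zero htf hτ, mul_zero, zero_mul, add_zero, ← sq]
    using hδ a 1

theorem stmt_18 {R : Type*} [Ring R]
    (htf : ∀ x : R, x + x = 0 → x = 0)
    (δ τ : R → R)
    (hδadd : ∀ x y, δ (x + y) = δ x + δ y)
    (hτadd : ∀ x y, τ (x + y) = τ x + τ y)
    (hτ : ∀ a b : R, τ (a * b * a) = τ a * b * a + a * τ b * a + a * b * τ a)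
    (hδ : ∀ a b : R, δ (a * b * a) = δ a * b * a + a * τ b * a + a * b * τ a) :
    ∀ a : R, δ (a ^ 2) = δ a * a + a * τ a :=
  stmt_18_general htf δ τ hτ hδ
end

section
/- If S is a unit-semiprime ring, then the matrix ring Mₙ(S) is unit-semiprime, i.e., for A ∈ Mₙ(S), if AUB = 0 for all units U of Mₙ(S) with B = A, then A = 0. -/
/-!
If `a * U * a = 0` for every unit `U`, then also `a * (v * N) * a = 0` for every unit `v` and
every `N` with `N * N = 0`, because `v * (1 + N)` is a unit. In a matrix ring, `v = u • 1` and
`N = E_ji` (`i ≠ j`) give `A i j * u * A i j = 0`, so `A` is diagonal; then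
`A * (u • 1) * A = diagonal (A i i * u * A i i) = 0` kills the diagonal.
-/

def IsUnitSemiprime (R : Type*) [Ring R] : Prop :=
  ∀ a : R, (∀ u : Rˣ, a * u * a = 0) → a = 0

theorem mul_mul_eq_zero_of_forall_units {R : Type*} [Ring R] {a : R}
    (ha : ∀ U : Rˣ, a * U * a = 0) (v : Rˣ) {N : R} (hN : N * N = 0) :
    a * (v * N) * a = 0 := by
  obtain ⟨w, hw⟩ := (show IsNilpotent N from ⟨2, by rw [sq, hN]⟩).isUnit_one_add
  have h := ha (v * w)
  rwa [Units.val_mul, hw, mul_one_add, mul_add, add_mul, ha v, zero_add] at h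

namespace Matrix

variable {ι R : Type*} [Fintype ι] [DecidableEq ι] [Ring R]

theorem mul_single_mul_apply (A B : Matrix ι ι R) (i j k l : ι) (c : R) :
    (A * single j i c * B) k l = A k j * c * B i l := by
  simp [mul_apply, single_apply, mul_assoc, ite_and]

def scalarUnits (ι : Type*) [Fintype ι] [DecidableEq ι] : Rˣ →* (Matrix ι ι R)ˣ :=
  Units.map (scalar ι).toMonoidHom

theorem mul_single_mul_eq_zero_of_forall_units {A : Matrix ι ι R}
    (hA : ∀ U : (Matrix ι ι R)ˣ, A * U * A = 0) {i j : ι} (hij : i ≠ j) (u : Rˣ) :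
    A * single j i (u : R) * A = 0 := by
  have h := mul_mul_eq_zero_of_forall_units hA (scalarUnits ι u)
    (single_mul_single_of_ne (1 : R) j i j hij 1)
  rwa [scalarUnits, Units.coe_map, RingHom.toMonoidHom_eq_coe, MonoidHom.coe_coe, scalar_apply,
    ← smul_eq_diagonal_mul, smul_single, smul_eq_mul, mul_one] at h

theorem _root_.IsUnitSemiprime.matrix (hR : IsUnitSemiprime R) :
    IsUnitSemiprime (Matrix ι ι R) := by
  intro A hA
  have hdiag : A.IsDiag := fun i j hij => hR _ fun u => by
    simpa [mul_single_mul_apply] using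
      congr_fun₂ (mul_single_mul_eq_zero_of_forall_units hA hij u) i j
  obtain ⟨d, rfl⟩ : ∃ d, A = diagonal d := ⟨A.diag, hdiag.diagonal_diag.symm⟩
  suffices d = 0 by rw [this]; exact diagonal_zero
  funext i
  refine hR _ fun u => ?_
  have h := congr_fun₂ (hA (scalarUnits ι u)) i i
  simpa [scalarUnits, scalar_apply, diagonal_mul_diagonal] using h

end Matrix

theorem stmt_19 {S : Type*} [Ring S] (n : ℕ)
    (hS : ∀ a : S, (∀ u : Sˣ, a * (u : S) * a = 0) → a = 0) :
    ∀ A : Matrix (Fin n) (Fin n) S,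
      (∀ U : (Matrix (Fin n) (Fin n) S)ˣ, A * U.val * A = 0) →
      A = 0 :=
  IsUnitSemiprime.matrix hS
end
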